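/- arXiv:2507.15144 — 3 statements merged into one kernel-verified Lean document; each statement's English description precedes it below -/
import Mathlib

section
/- With notation as follows: G̃ = G × ℤ with G the grading group, M ∈ (1/2)ℤ, ω ∈ ℤ, m a positive integer, p_K = ((M; 0, 1), ω), p_m = ((−(m−1)/2; 1, −m), 0). Let g₁ = ((α₁; β₁, γ₁), δ₁) ∈ G̃, and let β₂, γ₂ ∈ (1/2)ℤ, δ₂ ∈ ℤ, α₂ ∈ (1/2)ℤ with k := β₂ − β₁ ∈ ℤ and n := γ₂ − γ₁ + k·m ∈ ℤ. Then the element h = p_K^n · g₁ · p_m^k ∈ G̃ has Spin^c component equal to (β₂, γ₂); its Maslov component equals α₂ + [ (β₂−β₁)(M − 1/2 − β₁ − β₂)·m + (γ₂−γ₁)M + (α₁ − α₂) + (1/2)(β₂−β₁) − (β₂−β₁)γ₁ − (γ₂−γ₁)β₂ ]; and its Alexander component equals δ₂ + [ (β₂−β₁)ω·m + (δ₁ − δ₂) − (γ₁ − γ₂)ω ]. -/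
/-- The product on triples `(m; i, j)` given by
`(m₁; i₁, j₁)·(m₂; i₂, j₂) = (m₁ + m₂ + i₁j₂ − j₁i₂; i₁ + i₂, j₁ + j₂)`. -/
def Gmul (a b : ℚ × ℚ × ℚ) : ℚ × ℚ × ℚ :=
  (a.1 + b.1 + (a.2.1 * b.2.2 - a.2.2 * b.2.1), a.2.1 + b.2.1, a.2.2 + b.2.2)

/-- Inverse in `G`. -/
def Ginv (a : ℚ × ℚ × ℚ) : ℚ × ℚ × ℚ := (-a.1, -a.2.1, -a.2.2)

/-- `x` is a half-integer. -/
def halfInt (x : ℚ) : Prop := ∃ k : ℤ, x = k / 2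

/-- The enhanced grading group `G̃ = G × ℤ`, with componentwise product. -/
def Gtmul (a b : (ℚ × ℚ × ℚ) × ℤ) : (ℚ × ℚ × ℚ) × ℤ := (Gmul a.1 b.1, a.2 + b.2)

/-- Inverse in `G̃`. -/
def Gtinv (a : (ℚ × ℚ × ℚ) × ℤ) : (ℚ × ℚ × ℚ) × ℤ := (Ginv a.1, -a.2)

/-- Natural powers in `G̃`. -/
def Gtnpow (a : (ℚ × ℚ × ℚ) × ℤ) : ℕ → (ℚ × ℚ × ℚ) × ℤ
  | 0 => ((0, 0, 0), 0)
  | n + 1 => Gtmul (Gtnpow a n) a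

/-- Integer powers in `G̃`. -/
def Gtzpow (a : (ℚ × ℚ × ℚ) × ℤ) (n : ℤ) : (ℚ × ℚ × ℚ) × ℤ :=
  if 0 ≤ n then Gtnpow a n.toNat else Gtinv (Gtnpow a (-n).toNat)

lemma GtnpowK (M : ℚ) (ω : ℤ) (t : ℕ) :
    Gtnpow ((M, 0, 1), ω) t = (((t:ℚ)*M, 0, (t:ℚ)), (t:ℤ)*ω) := by
  induction t with
  | zero => simp [Gtnpow]
  | succ s ih =>
    simp only [Gtnpow, ih, Gtmul, Gmul]
    refine Prod.ext (Prod.ext ?_ (Prod.ext ?_ ?_)) ?_ <;> push_cast <;> ring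

lemma Gtnpowm (a c : ℚ) (t : ℕ) :
    Gtnpow ((a, 1, -c), 0) t = (((t:ℚ)*a, (t:ℚ), -((t:ℚ)*c)), 0) := by
  induction t with
  | zero => simp [Gtnpow]
  | succ s ih =>
    simp only [Gtnpow, ih, Gtmul, Gmul]
    refine Prod.ext (Prod.ext ?_ (Prod.ext ?_ ?_)) ?_ <;> push_cast <;> ring

lemma GtzpowK (M : ℚ) (ω : ℤ) (t : ℤ) :
    Gtzpow ((M, 0, 1), ω) t = (((t:ℚ)*M, 0, (t:ℚ)), t*ω) := by
  unfold Gtzpow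
  split
  · rw [GtnpowK]
    have h : ((t.toNat : ℤ)) = t := Int.toNat_of_nonneg ‹_›
    have h' : ((t.toNat : ℚ)) = (t:ℚ) := by exact_mod_cast h
    rw [h, h']
  · rw [GtnpowK, Gtinv, Ginv]
    have h : (((-t).toNat : ℤ)) = -t := Int.toNat_of_nonneg (by omega)
    have h' : (((-t).toNat : ℚ)) = -(t:ℚ) := by exact_mod_cast h
    refine Prod.ext (Prod.ext ?_ (Prod.ext ?_ ?_)) ?_ <;> simp [h, h'] <;> ring

lemma Gtzpowm (a c : ℚ) (t : ℤ) :
    Gtzpow ((a, 1, -c), 0) t = (((t:ℚ)*a, (t:ℚ), -((t:ℚ)*c)), 0) := by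
  unfold Gtzpow
  split
  · rw [Gtnpowm]
    have h' : ((t.toNat : ℚ)) = (t:ℚ) := by exact_mod_cast Int.toNat_of_nonneg ‹_›
    rw [h']
  · rw [Gtnpowm, Gtinv, Ginv]
    have h' : (((-t).toNat : ℚ)) = -(t:ℚ) := by
      exact_mod_cast Int.toNat_of_nonneg (by omega : (0:ℤ) ≤ -t)
    refine Prod.ext (Prod.ext ?_ (Prod.ext ?_ ?_)) ?_ <;> simp [h'] <;> ring

/-- Computation of `h = p_K^n · g₁ · p_m^k`: its Spin^c component is `(β₂, γ₂)`, its Maslov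
component is `α₂` plus the relative Maslov grading, and its Alexander component is `δ₂`
plus the relative Alexander grading, both explicit linear functions of `m`. -/
theorem stmt4 (M : ℚ) (hM : halfInt M) (ω : ℤ) (m : ℕ) (hm : 0 < m)
    (α₁ β₁ γ₁ : ℚ) (δ₁ : ℤ) (hα₁ : halfInt α₁) (hβ₁ : halfInt β₁) (hγ₁ : halfInt γ₁)
    (α₂ β₂ γ₂ : ℚ) (δ₂ : ℤ) (hα₂ : halfInt α₂) (hβ₂ : halfInt β₂) (hγ₂ : halfInt γ₂)
    (k n : ℤ) (hk : β₂ - β₁ = (k : ℚ)) (hn : γ₂ - γ₁ + (k : ℚ) * (m : ℚ) = (n : ℚ)) :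
    let pK : (ℚ × ℚ × ℚ) × ℤ := ((M, 0, 1), ω)
    let pm : (ℚ × ℚ × ℚ) × ℤ := ((-(((m:ℚ) - 1)/2), 1, -(m:ℚ)), 0)
    let h := Gtmul (Gtmul (Gtzpow pK n) ((α₁, β₁, γ₁), δ₁)) (Gtzpow pm k)
    h.1.2.1 = β₂ ∧ h.1.2.2 = γ₂ ∧
    h.1.1 = α₂ + ((β₂ - β₁) * (M - 1/2 - β₁ - β₂) * (m:ℚ) + (γ₂ - γ₁) * M + (α₁ - α₂)
      + (1/2) * (β₂ - β₁) - (β₂ - β₁) * γ₁ - (γ₂ - γ₁) * β₂) ∧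
    ((h.2 : ℚ)) = (δ₂ : ℚ) + ((β₂ - β₁) * (ω : ℚ) * (m : ℚ) + ((δ₁ : ℚ) - (δ₂ : ℚ))
      - (γ₁ - γ₂) * (ω : ℚ)) := by
  intro pK pm h
  have hmz : Gtzpow pm k = (((k:ℚ) * -(((m:ℚ) - 1)/2), (k:ℚ), -((k:ℚ)*(m:ℚ))), 0) :=
    Gtzpowm (-(((m:ℚ) - 1)/2)) (m:ℚ) k
  have hb2 : β₂ = β₁ + (k:ℚ) := by linarith
  have hnq : (n:ℚ) = γ₂ - γ₁ + (k:ℚ)*(m:ℚ) := by linarith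
  have hh : h = Gtmul (Gtmul (((((n:ℚ)*M, 0, (n:ℚ)), n*ω)) : (ℚ × ℚ × ℚ) × ℤ)
      ((α₁, β₁, γ₁), δ₁)) (((((k:ℚ) * -(((m:ℚ) - 1)/2), (k:ℚ), -((k:ℚ)*(m:ℚ))), 0)) :
      (ℚ × ℚ × ℚ) × ℤ) := by
    show Gtmul (Gtmul (Gtzpow pK n) ((α₁, β₁, γ₁), δ₁)) (Gtzpow pm k) = _
    rw [hmz, show pK = ((M, 0, 1), ω) from rfl, GtzpowK]
  rw [hh]
  simp only [Gtmul, Gmul]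
  refine ⟨by linarith, by linarith, ?_, ?_⟩
  · rw [hb2, hnq]; ring
  · push_cast
    rw [hb2, hnq]; ring
end

section
/- Let d ∈ (1/2)ℤ and F ∈ ℚ. Suppose there are infinitely many positive integers m for which there exists an integer k with 0 ≤ k ≤ m − 1 and k·(2d − 2) = d·(d − 1)·m + F. Then 0 ≤ d ≤ 2. -/
/-- If for infinitely many `m` there is `0 ≤ k ≤ m − 1` with `k(2d − 2) = d(d − 1)m + F`,
then `0 ≤ d ≤ 2`. -/
theorem stmt14 (d : ℚ) (hd : halfInt d) (F : ℚ)
    (h : {m : ℕ | 0 < m ∧ ∃ k : ℤ, 0 ≤ k ∧ k ≤ (m : ℤ) - 1 ∧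
      (k : ℚ) * (2 * d - 2) = d * (d - 1) * (m : ℚ) + F}.Infinite) :
    0 ≤ d ∧ d ≤ 2 := by
  constructor
  · by_contra hlt
    push_neg at hlt
    have hdd : 0 < d * (d - 1) := by nlinarith
    obtain ⟨N, hN⟩ := exists_nat_gt (|F| / (d * (d - 1)))
    obtain ⟨m, hm, hNm⟩ := h.exists_gt N
    obtain ⟨hm0, k, hk0, hk1, heq⟩ := hm
    have hk0' : (0:ℚ) ≤ (k:ℚ) := by exact_mod_cast hk0
    have h1 : (k:ℚ) * (2*d - 2) ≤ 0 :=
      mul_nonpos_of_nonneg_of_nonpos hk0' (by linarith)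
    have hmN : (N:ℚ) < (m:ℚ) := by exact_mod_cast hNm
    have habs : -F ≤ |F| := neg_le_abs F
    have hN' : |F| < (N:ℚ) * (d*(d-1)) := by rwa [div_lt_iff₀ hdd] at hN
    nlinarith [mul_lt_mul_of_pos_left hmN hdd]
  · by_contra hgt
    push_neg at hgt
    have hdd : 0 < (d - 1) * (d - 2) := by nlinarith
    obtain ⟨N, hN⟩ := exists_nat_gt ((|F| + 2) / ((d - 1) * (d - 2)))
    obtain ⟨m, hm, hNm⟩ := h.exists_gt N
    obtain ⟨hm0, k, hk0, hk1, heq⟩ := hm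
    have hk1' : (k:ℚ) ≤ (m:ℚ) - 1 := by exact_mod_cast hk1
    have h1 : (k:ℚ) * (2*d - 2) ≤ ((m:ℚ) - 1) * (2*d - 2) :=
      mul_le_mul_of_nonneg_right hk1' (by linarith)
    have hmN : (N:ℚ) < (m:ℚ) := by exact_mod_cast hNm
    have habs : -F ≤ |F| := neg_le_abs F
    have hN' : |F| + 2 < (N:ℚ) * ((d-1)*(d-2)) := by rwa [div_lt_iff₀ hdd] at hN
    nlinarith [mul_lt_mul_of_pos_left hmN hdd]
end

section
/- Let V be a finite-dimensional vector space over 𝔽₂ with a distinguished basis C, and let ∂ : V → V be a linear map with ∂ ∘ ∂ = 0. For a subset I ⊆ C write S_I = Σ_{ν ∈ I} ν ∈ V. Call a family of subsets I₁, …, I_d ⊆ C a homology basis if each S_{I_j} lies in ker ∂ and the classes [S_{I_1}], …, [S_{I_d}] form a basis of ker ∂ / im ∂. Call the family minimal if for every j and every proper nonempty subset I′ ⊊ I_j, replacing S_{I_j} by S_{I′} does not yield a homology basis. Then in a minimal homology basis, every S_{I_j} is a minimal cycle, i.e., no proper nonempty subset I′ ⊊ I_j satisfies ∂S_{I′} =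 0. -/
/-!
Passing to homology `V ⧸ im ∂`, the classes `[S_{I_k}]` are linearly independent and span the
image of `ker ∂`. Replacing one vector `v_j` of such a family by a combination `∑ c_k v_k` with
`c_j ≠ 0` keeps both properties. If `I′ ⊊ I_j` were a nonempty cycle, write
`[S_{I′}] = ∑ c_k [S_{I_k}]`: when `c_j ≠ 0`, `I′` may replace `I_j`; when `c_j = 0`, the
complement `I_j \ I′` may, since `[S_{I_j \ I′}] = [S_{I_j}] - [S_{I′}]` has coefficient `1` at `j`.
Either way minimality is contradicted.
-/

/-- The family of subsets `I₁, …, I_d` of the distinguished basis is a homology basis: each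
`S_{I_j}` is a cycle, the classes span the homology `ker ∂ / im ∂`, and they are linearly
independent modulo boundaries. -/
def IsHomologyBasis {ι V : Type} [Fintype ι] [AddCommGroup V] [Module (ZMod 2) V]
    (bd : V →ₗ[ZMod 2] V) (b : Module.Basis ι (ZMod 2) V) {d : ℕ} (I : Fin d → Finset ι) : Prop :=
  (∀ j, bd (∑ i ∈ I j, b i) = 0) ∧
  (∀ z : V, bd z = 0 → ∃ c : Fin d → ZMod 2,
      z - ∑ j, c j • (∑ i ∈ I j, b i) ∈ LinearMap.range bd) ∧
  (∀ c : Fin d → ZMod 2,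
      (∑ j, c j • (∑ i ∈ I j, b i)) ∈ LinearMap.range bd → c = 0)

section Exchange

open Submodule

variable {K Q ι : Type*} [Field K] [AddCommGroup Q] [Module K Q] [Fintype ι] [DecidableEq ι]
  {v : ι → Q} {c : ι → K} {j : ι}

theorem LinearIndependent.update_sum_smul (hv : LinearIndependent K v) (hc : c j ≠ 0) :
    LinearIndependent K (Function.update v j (∑ k, c k • v k)) :=
  hv.update j _ ⟨1, one_mem _, Finsupp.equivFunOnFinite.symm c, by simpa using hc, by
    simp [Finsupp.linearCombination_apply, Finsupp.sum_fintype]⟩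

theorem LinearIndependent.span_range_update_sum_smul (hv : LinearIndependent K v) (hc : c j ≠ 0) :
    span K (Set.range (Function.update v j (∑ k, c k • v k))) = span K (Set.range v) := by
  have := Module.Finite.span_of_finite K (Set.finite_range v)
  refine eq_of_le_of_finrank_eq (span_le.2 ?_) ?_
  · rintro _ ⟨k, rfl⟩
    rcases eq_or_ne k j with rfl | hk
    · simpa using sum_mem fun i _ => smul_mem _ (c i) (subset_span (Set.mem_range_self i))
    · simpa [hk] using subset_span (Set.mem_range_self k)
  · rw [finrank_span_eq_card hv, finrank_span_eq_card (hv.update_sum_smul hc)]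

end Exchange

section HomologyBasis

open Submodule

variable {ι V : Type} [Fintype ι] [AddCommGroup V] [Module (ZMod 2) V]
  {bd : V →ₗ[ZMod 2] V} {b : Module.Basis ι (ZMod 2) V} {d : ℕ} {I : Fin d → Finset ι}

theorem isHomologyBasis_iff : IsHomologyBasis bd b I ↔
    (∀ j, bd (∑ i ∈ I j, b i) = 0) ∧
    (∀ z, bd z = 0 → (LinearMap.range bd).mkQ z ∈
      span (ZMod 2) (Set.range fun j => (LinearMap.range bd).mkQ (∑ i ∈ I j, b i))) ∧
    LinearIndependent (ZMod 2) fun j => (LinearMap.range bd).mkQ (∑ i ∈ I j, b i) := by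
  refine and_congr Iff.rfl (and_congr (forall₂_congr fun _ _ => ?_) ?_)
  · simp_rw [mem_span_range_iff_exists_fun, ← map_smul, ← map_sum, mkQ_apply,
      Submodule.Quotient.eq', neg_add_eq_sub]
  · simp_rw [Fintype.linearIndependent_iff, ← map_smul, ← map_sum, mkQ_apply,
      Submodule.Quotient.mk_eq_zero, funext_iff, Pi.zero_apply]

theorem IsHomologyBasis.update (h : IsHomologyBasis bd b I) (j : Fin d) {J : Finset ι}
    (hJ : bd (∑ i ∈ J, b i) = 0) {c : Fin d → ZMod 2} (hcj : c j ≠ 0)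
    (hc : ∑ k, c k • (LinearMap.range bd).mkQ (∑ i ∈ I k, b i) =
      (LinearMap.range bd).mkQ (∑ i ∈ J, b i)) :
    IsHomologyBasis bd b (Function.update I j J) := by
  rw [isHomologyBasis_iff] at h ⊢
  obtain ⟨hcyc, hspan, hind⟩ := h
  have hclass : (fun k => (LinearMap.range bd).mkQ (∑ i ∈ Function.update I j J k, b i)) =
      Function.update (fun k => (LinearMap.range bd).mkQ (∑ i ∈ I k, b i)) j
        (∑ k, c k • (LinearMap.range bd).mkQ (∑ i ∈ I k, b i)) := by
    rw [hc]
    exact funext (Function.apply_update (fun _ J => (LinearMap.range bd).mkQ (∑ i ∈ J, b i)) I j J)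
  refine ⟨fun k => ?_, ?_, ?_⟩
  · rcases eq_or_ne k j with rfl | hk
    · simpa using hJ
    · simpa [hk] using hcyc k
  · rw [hclass, hind.span_range_update_sum_smul hcj]
    exact hspan
  · rw [hclass]
    exact hind.update_sum_smul hcj

end HomologyBasis

theorem stmt18_general {ι V : Type} [Fintype ι]
    [AddCommGroup V] [Module (ZMod 2) V]
    (b : Module.Basis ι (ZMod 2) V)
    (bd : V →ₗ[ZMod 2] V)
    (d : ℕ) (I : Fin d → Finset ι)
    (hbasis : IsHomologyBasis bd b I)
    (hmin : ∀ j : Fin d, ∀ I' : Finset ι, I' ⊂ I j → I'.Nonempty →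
      ¬ IsHomologyBasis bd b (Function.update I j I')) :
    ∀ j : Fin d, ∀ I' : Finset ι, I' ⊂ I j → I'.Nonempty →
      bd (∑ i ∈ I', b i) ≠ 0 := by
  classical
  intro j I' hsub hne hcyc
  obtain ⟨c, hc⟩ :=
    (Submodule.mem_span_range_iff_exists_fun _).1 ((isHomologyBasis_iff.1 hbasis).2.1 _ hcyc)
  by_cases hcj : c j = 0
  · have hcompl : ∑ i ∈ I j \ I', b i = ∑ i ∈ I j, b i - ∑ i ∈ I', b i :=
      eq_sub_of_add_eq (Finset.sum_sdiff hsub.1)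
    refine hmin j (I j \ I') (Finset.sdiff_ssubset hsub.1 hne) (Finset.sdiff_nonempty.2 hsub.2)
      (hbasis.update j (c := Pi.single j 1 - c) ?_ (by simp [hcj]) ?_)
    · rw [hcompl, map_sub, hbasis.1 j, hcyc, sub_zero]
    · rw [hcompl, map_sub, ← hc]
      simp only [Pi.sub_apply, sub_smul, Finset.sum_sub_distrib, Pi.single_apply, ite_smul, one_smul,
        zero_smul, Finset.sum_ite_eq', Finset.mem_univ, if_true]
  · exact hmin j I' hsub hne (hbasis.update j hcyc hcj hc)

/-- In a minimal homology basis over `𝔽₂`, every `S_{I_j}` is a minimal cycle: no proper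
nonempty subset `I′ ⊊ I_j` has `∂S_{I′} = 0`. -/
theorem stmt18 {ι V : Type} [Fintype ι] [DecidableEq ι]
    [AddCommGroup V] [Module (ZMod 2) V]
    (b : Module.Basis ι (ZMod 2) V)
    (bd : V →ₗ[ZMod 2] V) (hbd : bd ∘ₗ bd = 0)
    (d : ℕ) (I : Fin d → Finset ι)
    (hbasis : IsHomologyBasis bd b I)
    (hmin : ∀ j : Fin d, ∀ I' : Finset ι, I' ⊂ I j → I'.Nonempty →
      ¬ IsHomologyBasis bd b (Function.update I j I')) :
    ∀ j : Fin d, ∀ I' : Finset ι, I' ⊂ I j → I'.Nonempty →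
      bd (∑ i ∈ I', b i) ≠ 0 :=
  stmt18_general b bd d I hbasis hmin
end
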